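/- arXiv:2002.08514 — 3 statements merged into one kernel-verified Lean document; each statement's English description precedes it below -/
import Mathlib

section
/- Let M be a time-homogeneous Markov chain on a finite state space 𝕄 with a unique recurrent communicating class, and let R : 𝕄 × 𝕄 → ℝ₊ be a reward function. Then there exists a nonnegative function H : 𝕄 → ℝ₊ such that for every state m, E[R(M_{k+1}, M_k) | M_k = m] = E[H(M_{k+1}) − H(M_k) | M_k = m] + r_avg, where r_avg = Σ_{m ∈ 𝕄} E[R(M_{k+1}, M_k) | M_k = m] ϱ(m) and ϱ is the stationary distribution of M. -/
/-!
Solve the Poisson equation `(1 - P) H = r_avg - f`, where `f m = E[R(M_{k+1}, M_k) | M_k = m]`.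
By the maximum principle every `P`-harmonic function is constant, since all states reach `nstar`;
so `ker (1 - P)` is the line of constants and, by rank–nullity, `range (1 - P)` is a hyperplane.
Stationarity puts this range inside the hyperplane `ϱ ⬝ᵥ · = 0`, hence the two agree, and
`r_avg - f` has `ϱ`-mean zero by the very definition of `r_avg`. Subtracting the minimum of `H`
makes it nonnegative without changing `(1 - P) H`.
-/

open Matrix Finset

namespace Matrix

variable {n : Type*} [Fintype n] [DecidableEq n]

theorem apply_eq_of_mulVec_eq_self_of_apply_pos {Q : Matrix n n ℝ}
    (hQ : Q ∈ rowStochastic ℝ n) {h : n → ℝ} (hh : Q *ᵥ h = h) {i j : n}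
    (hmax : ∀ m, h m ≤ h i) (hpos : 0 < Q i j) :
    h j = h i := by
  have hzero : ∑ m, Q i m * (h i - h m) = 0 := by
    have hi : ∑ m, Q i m * h m = h i := congrFun hh i
    simp only [mul_sub, sum_sub_distrib, ← sum_mul, sum_row_of_mem_rowStochastic hQ, one_mul, hi,
      sub_self]
  have hterm := (sum_eq_zero_iff_of_nonneg fun m _ =>
    mul_nonneg (nonneg_of_mem_rowStochastic hQ) (sub_nonneg.2 (hmax m))).1 hzero j (mem_univ j)
  linarith [(mul_eq_zero.1 hterm).resolve_left hpos.ne']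

theorem le_apply_of_mulVec_eq_self {P : Matrix n n ℝ} (hP : P ∈ rowStochastic ℝ n)
    {h : n → ℝ} (hh : P *ᵥ h = h) {j : n} (hj : ∀ i, ∃ k : ℕ, 0 < (P ^ k) i j) (i : n) :
    h i ≤ h j := by
  obtain ⟨i₀, -, hi₀⟩ := exists_max_image univ h ⟨i, mem_univ i⟩
  have hpow (k : ℕ) : (P ^ k) *ᵥ h = h := by
    induction k with
    | zero => simp
    | succ k ih => rw [pow_succ, ← mulVec_mulVec, hh, ih]
  obtain ⟨k, hk⟩ := hj i₀
  have hmax (m : n) : h m ≤ h i₀ := hi₀ m (mem_univ m)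
  rw [apply_eq_of_mulVec_eq_self_of_apply_pos (pow_mem hP k) (hpow k) hmax hk]
  exact hmax i

theorem ker_one_sub_mulVecLin_eq_span_one {P : Matrix n n ℝ} (hP : P ∈ rowStochastic ℝ n)
    {j : n} (hj : ∀ i, ∃ k : ℕ, 0 < (P ^ k) i j) :
    LinearMap.ker (1 - P).mulVecLin = ℝ ∙ (1 : n → ℝ) := by
  refine le_antisymm (fun h hh => ?_) ?_
  · have hharm : P *ᵥ h = h := by
      rw [LinearMap.mem_ker, mulVecLin_apply, sub_mulVec, one_mulVec, sub_eq_zero] at hh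
      exact hh.symm
    have hneg : P *ᵥ (-h) = -h := by rw [mulVec_neg, hharm]
    refine Submodule.mem_span_singleton.2 ⟨h j, funext fun i => ?_⟩
    have hge : -h i ≤ -h j := le_apply_of_mulVec_eq_self hP hneg hj i
    simp only [Pi.smul_apply, Pi.one_apply, smul_eq_mul, mul_one]
    exact le_antisymm (neg_le_neg_iff.1 hge) (le_apply_of_mulVec_eq_self hP hharm hj i)
  · rw [Submodule.span_le, Set.singleton_subset_iff, SetLike.mem_coe, LinearMap.mem_ker,
      mulVecLin_apply, sub_mulVec, one_mulVec, one_vecMul_of_mem_rowStochastic hP, sub_self]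

variable {K : Type*} [Field K]

theorem range_one_sub_mulVecLin_eq_ker_dotProduct [Nonempty n] {P : Matrix n n K}
    (hker : LinearMap.ker (1 - P).mulVecLin = K ∙ (1 : n → K))
    {ϱ : n → K} (hstat : ϱ ᵥ* P = ϱ) (hϱ : ϱ ≠ 0) :
    LinearMap.range (1 - P).mulVecLin = LinearMap.ker (dotProductBilin K K ϱ) := by
  have hle : LinearMap.range (1 - P).mulVecLin ≤ LinearMap.ker (dotProductBilin K K ϱ) := by
    rintro _ ⟨h, rfl⟩
    rw [LinearMap.mem_ker, dotProductBilin_apply_apply, mulVecLin_apply, sub_mulVec, one_mulVec,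
      dotProduct_sub, dotProduct_mulVec, hstat, sub_self]
  have hsurj : LinearMap.range (dotProductBilin K K ϱ) = ⊤ := by
    refine Module.Dual.range_eq_top_of_ne_zero fun h0 => hϱ (funext fun i => ?_)
    simpa using LinearMap.congr_fun h0 (Pi.single i 1)
  refine Submodule.eq_of_le_of_finrank_eq hle ?_
  have h1 := LinearMap.finrank_range_add_finrank_ker (1 - P).mulVecLin
  have h2 := LinearMap.finrank_range_add_finrank_ker (dotProductBilin K K ϱ)
  rw [hker, finrank_span_singleton one_ne_zero] at h1
  rw [hsurj, finrank_top, Module.finrank_self] at h2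
  omega

theorem exists_nonneg_sub_mulVec_eq {P : Matrix n n ℝ} (hP : P ∈ rowStochastic ℝ n) {j : n}
    (hj : ∀ i, ∃ k : ℕ, 0 < (P ^ k) i j) {ϱ : n → ℝ} (hstat : ϱ ᵥ* P = ϱ)
    (hϱ : ϱ ≠ 0) {g : n → ℝ} (hg : ϱ ⬝ᵥ g = 0) :
    ∃ H : n → ℝ, 0 ≤ H ∧ H - P *ᵥ H = g := by
  have : Nonempty n := ⟨j⟩
  have hrange := range_one_sub_mulVecLin_eq_ker_dotProduct
    (ker_one_sub_mulVecLin_eq_span_one hP hj) hstat hϱ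
  obtain ⟨H₀, hH₀⟩ : g ∈ LinearMap.range (1 - P).mulVecLin := hrange ▸ hg
  set c := univ.inf' univ_nonempty H₀
  refine ⟨H₀ - c • 1, fun m => ?_, ?_⟩
  · simp only [Pi.zero_apply, Pi.sub_apply, Pi.smul_apply, Pi.one_apply, smul_eq_mul, mul_one,
      sub_nonneg]
    exact inf'_le H₀ (mem_univ m)
  · rw [← hH₀, mulVecLin_apply, sub_mulVec, one_mulVec, mulVec_sub, mulVec_smul,
      one_vecMul_of_mem_rowStochastic hP]
    abel

end Matrix

theorem stmt0_general {M : Type*} [Fintype M] [DecidableEq M]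
    (P : Matrix M M ℝ)
    (hP0 : ∀ m m', 0 ≤ P m m') (hP1 : ∀ m, ∑ m', P m m' = 1)
    (hUniqueRec : ∃ nstar : M, ∀ m : M, ∃ k : ℕ, 0 < (P ^ k) m nstar)
    (ϱ : M → ℝ) (hϱ1 : ∑ m, ϱ m = 1)
    (hstat : ∀ m', ∑ m, ϱ m * P m m' = ϱ m')
    (R : M → M → ℝ) :
    ∃ H : M → ℝ, (∀ m, 0 ≤ H m) ∧
      ∀ m : M,
        ∑ m', P m m' * R m' m
          = (∑ m', P m m' * (H m' - H m))
            + ∑ m'', (∑ m', P m'' m' * R m' m'') * ϱ m'' := by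
  obtain ⟨j, hj⟩ := hUniqueRec
  have hP : P ∈ rowStochastic ℝ M := mem_rowStochastic_iff_sum.2 ⟨hP0, hP1⟩
  have hϱ : ϱ ≠ 0 := by rintro rfl; simp at hϱ1
  set f : M → ℝ := fun m => ∑ m', P m m' * R m' m
  set r := ∑ m, f m * ϱ m
  have hmean : ϱ ⬝ᵥ (fun m => r - f m) = 0 := by
    simp only [dotProduct, mul_sub, sum_sub_distrib, ← sum_mul, hϱ1, one_mul, r]
    simp only [mul_comm, sub_self]
  obtain ⟨H, hH0, hH⟩ := exists_nonneg_sub_mulVec_eq hP hj (funext hstat) hϱ hmean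
  refine ⟨H, hH0, fun m => ?_⟩
  have hm : H m - ∑ m', P m m' * H m' = r - f m := congrFun hH m
  have hdrift : ∑ m', P m m' * (H m' - H m) = ∑ m', P m m' * H m' - H m := by
    simp only [mul_sub, sum_sub_distrib, ← sum_mul, hP1 m, one_mul]
  rw [hdrift]
  linarith

/-- **Potential-like function for a finite Markov chain.**
`P` is a row-stochastic transition matrix on the finite state space `M` with a
unique recurrent communicating class (encoded by the existence of a state `nstar`
reachable from every state), `ϱ` is its stationary PMF, and `R` is a nonnegative
reward.  Then there is a nonnegative potential-like function `H` satisfying the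
Poisson-equation-type identity
`E[R(M_{k+1},M_k) | M_k = m] = E[H(M_{k+1}) - H(M_k) | M_k = m] + r_avg`. -/
theorem stmt0 {M : Type*} [Fintype M] [DecidableEq M]
    (P : Matrix M M ℝ)
    (hP0 : ∀ m m', 0 ≤ P m m') (hP1 : ∀ m, ∑ m', P m m' = 1)
    (hUniqueRec : ∃ nstar : M, ∀ m : M, ∃ k : ℕ, 0 < (P ^ k) m nstar)
    (ϱ : M → ℝ) (hϱ0 : ∀ m, 0 ≤ ϱ m) (hϱ1 : ∑ m, ϱ m = 1)
    (hstat : ∀ m', ∑ m, ϱ m * P m m' = ϱ m')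
    (R : M → M → ℝ) (hR : ∀ m m', 0 ≤ R m m') :
    ∃ H : M → ℝ, (∀ m, 0 ≤ H m) ∧
      ∀ m : M,
        ∑ m', P m m' * R m' m
          = (∑ m', P m m' * (H m' - H m))
            + ∑ m'', (∑ m', P m'' m' * R m' m'') * ϱ m'' :=
  stmt0_general P hP0 hP1 hUniqueRec ϱ hϱ1 hstat R
end

section
/- Let P₁ and P₂ be two row-stochastic matrices on a finite state space 𝕐 that agree on all rows except possibly row y₀, with P₁ and P₂ having stationary distributions π₁ and π₂ respectively, both with π₁(y₀) > 0 and π₂(y₀) > 0. For α ∈ (0,1), set γ := α π₂(y₀) / (α π₂(y₀) + (1−α) π₁(y₀)), and let P' be the matrix equal to P₁ (and P₂) off row y₀, with row y₀ equal to (1−γ)·(row y₀ of P₁) + γ·(row y₀ of P₂). Assume additionally that π₂(y) > 0 implies row y of P₁ equals row y of P₂ for all y ≠ y₀. Then π' := (1−α) π₁ + α π₂ is a stationary distribution of P'. -/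
open Matrix Finset

/-!
Read `π' ᵥ* P'` as the sum over `y` of the rows `π' y • P' y`. Off `y₀`, the row
`π' y • P₁ y` splits as `(1 - α) π₁ y • P₁ y + α π₂ y • P₂ y`, since `P₁ y = P₂ y`
wherever `π₂ y ≠ 0`. At `y₀` the weight `γ` is chosen so that
`π' y₀ (1 - γ) = (1 - α) π₁ y₀` and `π' y₀ γ = α π₂ y₀`, so the same splitting holds.
Summing the rows gives `π' ᵥ* P' = (1 - α) π₁ ᵥ* P₁ + α π₂ ᵥ* P₂ = π'`.
-/

theorem Matrix.vecMul_eq_add_of_smul_row_eq {m n α : Type*} [Fintype m]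
    [NonUnitalNonAssocSemiring α] {w u v : m → α} {P Q R : Matrix m n α}
    (h : ∀ i, w i • P i = u i • Q i + v i • R i) :
    w ᵥ* P = u ᵥ* Q + v ᵥ* R := by
  simp only [vecMul_eq_sum, h, sum_add_distrib]

theorem smul_eq_smul_of_pos_imp_eq {R M : Type*} [Semiring R] [PartialOrder R]
    [AddCommMonoid M] [Module R M] {c : R} {x y : M} (hc : 0 ≤ c) (h : 0 < c → x = y) : c • x = c • y := by
  rcases hc.eq_or_lt with rfl | hc
  · simp only [zero_smul]
  · rw [h hc]

theorem add_smul_mix_of_eq_div {𝕜 M : Type*} [Field 𝕜] [AddCommGroup M] [Module 𝕜 M]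
    {a b γ : 𝕜} (x y : M) (hab : b + a ≠ 0) (hγ : γ = b / (b + a)) :
    (a + b) • ((1 - γ) • x + γ • y) = a • x + b • y := by
  have hcompl : 1 - γ = a / (b + a) := by
    rw [hγ]
    field_simp
    ring
  rw [smul_add, smul_smul, smul_smul, hcompl, hγ, add_comm a b,
    mul_div_cancel₀ _ hab, mul_div_cancel₀ _ hab]

theorem stmt15_general {Y : Type*} [Fintype Y]
    (P₁ P₂ P' : Matrix Y Y ℝ)
    (y₀ : Y)
    (π₁ π₂ : Y → ℝ)
    (hπ₁0 : ∀ y, 0 ≤ π₁ y) (hπ₁1 : ∑ y, π₁ y = 1) (hπ₁stat : π₁ ᵥ* P₁ = π₁)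
    (hπ₂0 : ∀ y, 0 ≤ π₂ y) (hπ₂1 : ∑ y, π₂ y = 1) (hπ₂stat : π₂ ᵥ* P₂ = π₂)
    (hπ₂pos : 0 < π₂ y₀)
    (hsupp : ∀ y, y ≠ y₀ → 0 < π₂ y → P₁ y = P₂ y)
    (α γ : ℝ) (hα : α ∈ Set.Ioo (0 : ℝ) 1)
    (hγ : γ = α * π₂ y₀ / (α * π₂ y₀ + (1 - α) * π₁ y₀))
    (hP'off : ∀ y, y ≠ y₀ → P' y = P₁ y)
    (hP'y₀ : ∀ z, P' y₀ z = (1 - γ) * P₁ y₀ z + γ * P₂ y₀ z) :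
    ((fun y => (1 - α) * π₁ y + α * π₂ y) ᵥ* P'
        = fun y => (1 - α) * π₁ y + α * π₂ y) ∧
    (∀ y, 0 ≤ (1 - α) * π₁ y + α * π₂ y) ∧
    (∑ y, ((1 - α) * π₁ y + α * π₂ y) = 1) := by
  obtain ⟨hα0, hα1⟩ := hα
  have hmix : (fun y => (1 - α) * π₁ y + α * π₂ y) = (1 - α) • π₁ + α • π₂ := rfl
  have hweight : α * π₂ y₀ + (1 - α) * π₁ y₀ ≠ 0 :=
    (add_pos_of_pos_of_nonneg (mul_pos hα0 hπ₂pos) (mul_nonneg (by linarith) (hπ₁0 y₀))).ne'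
  have hrows : ∀ y, ((1 - α) * π₁ y + α * π₂ y) • P' y
      = ((1 - α) • π₁) y • P₁ y + (α • π₂) y • P₂ y := by
    intro y
    by_cases hy : y = y₀
    · subst hy
      have hP' : P' y = (1 - γ) • P₁ y + γ • P₂ y := funext hP'y₀
      rw [hP', add_smul_mix_of_eq_div _ _ hweight hγ]
      rfl
    · simp only [hP'off y hy, Pi.smul_apply, smul_eq_mul, add_smul, mul_smul]
      rw [smul_eq_smul_of_pos_imp_eq (hπ₂0 y) (hsupp y hy)]
  refine ⟨?_, hmix ▸ convex_stdSimplex ℝ Y ⟨hπ₁0, hπ₁1⟩ ⟨hπ₂0, hπ₂1⟩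
    (by linarith) hα0.le (by ring)⟩
  rw [vecMul_eq_add_of_smul_row_eq hrows, smul_vecMul, smul_vecMul, hπ₁stat, hπ₂stat, hmix]

/-- **Splitting of stationary distributions under row mixing.**
Let `P₁, P₂` be row-stochastic matrices on a finite set `Y` agreeing on all
rows except possibly `y₀`, with stationary probability vectors `π₁, π₂`, both
positive at `y₀`, and suppose that whenever `π₂ y > 0` for `y ≠ y₀` the rows
of `P₁` and `P₂` at `y` agree.  For `α ∈ (0,1)` and
`γ = α π₂(y₀) / (α π₂(y₀) + (1−α) π₁(y₀))`, let `P'` agree with `P₁` off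
`y₀` and have the `γ`-mixed row at `y₀`.  Then `(1−α) π₁ + α π₂` is a
stationary distribution of `P'`. -/
theorem stmt15 {Y : Type*} [Fintype Y] [DecidableEq Y]
    (P₁ P₂ P' : Matrix Y Y ℝ)
    (hP₁0 : ∀ i j, 0 ≤ P₁ i j) (hP₁1 : ∀ i, ∑ j, P₁ i j = 1)
    (hP₂0 : ∀ i j, 0 ≤ P₂ i j) (hP₂1 : ∀ i, ∑ j, P₂ i j = 1)
    (y₀ : Y)
    (hagree : ∀ y, y ≠ y₀ → P₁ y = P₂ y)
    (π₁ π₂ : Y → ℝ)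
    (hπ₁0 : ∀ y, 0 ≤ π₁ y) (hπ₁1 : ∑ y, π₁ y = 1) (hπ₁stat : π₁ ᵥ* P₁ = π₁)
    (hπ₂0 : ∀ y, 0 ≤ π₂ y) (hπ₂1 : ∑ y, π₂ y = 1) (hπ₂stat : π₂ ᵥ* P₂ = π₂)
    (hπ₁pos : 0 < π₁ y₀) (hπ₂pos : 0 < π₂ y₀)
    (hsupp : ∀ y, y ≠ y₀ → 0 < π₂ y → P₁ y = P₂ y)
    (α γ : ℝ) (hα : α ∈ Set.Ioo (0 : ℝ) 1)
    (hγ : γ = α * π₂ y₀ / (α * π₂ y₀ + (1 - α) * π₁ y₀))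
    (hP'off : ∀ y, y ≠ y₀ → P' y = P₁ y)
    (hP'y₀ : ∀ z, P' y₀ z = (1 - γ) * P₁ y₀ z + γ * P₂ y₀ z) :
    ((fun y => (1 - α) * π₁ y + α * π₂ y) ᵥ* P'
        = fun y => (1 - α) * π₁ y + α * π₂ y) ∧
    (∀ y, 0 ≤ (1 - α) * π₁ y + α * π₂ y) ∧
    (∑ y, ((1 - α) * π₁ y + α * π₂ y) = 1) :=
  stmt15_general P₁ P₂ P' y₀ π₁ π₂ hπ₁0 hπ₁1 hπ₁stat hπ₂0 hπ₂1 hπ₂stat hπ₂pos hsupp α γ hα hγ hP'off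
    hP'y₀
end

section
/- Under the hypotheses of the previous statement (stationary distribution splitting), for any reward functions u, v : 𝕐 → ℝ where u(y) is computed with the mixed row weight at y₀, the mixed-policy averages also split: Σ_y π'(y) φ'(y) μ(y) = (1−α) Σ_y π₁(y) φ₁(y) μ(y) + α Σ_y π₂(y) φ₂(y) μ(y), where φ' equals φ₁ = φ₂ off y₀ (on the relevant supports) and φ'(y₀) = γ as defined; similarly Σ_y π'(y) φ'(y) = (1−α) Σ_y π₁(y) φ₁(y) + α Σ_y π₂(y) φ₂(y). -/
open Matrix Finset

/-! At `y₀` the mixing weight `γ` is exactly the share of the mixed stationary mass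
`(1-α) π₁(y₀) + α π₂(y₀)` contributed by `α π₂(y₀)`, so the mixed rate there is `α π₂(y₀)`,
matching `φ₁(y₀) = 0`, `φ₂(y₀) = 1`. Off `y₀` the mixed policy is `φ₁`, which agrees with `φ₂`
wherever `π₂` charges. Hence the rate density `π' φ'` is pointwise the `α`-mixture of the
densities `π₁ φ₁` and `π₂ φ₂`, and summing gives both identities. -/

lemma mixture_mul_mixingWeight {α a b : ℝ} (hden : α * b + (1 - α) * a ≠ 0) :
    ((1 - α) * a + α * b) * (α * b / (α * b + (1 - α) * a)) = α * b := by
  rw [add_comm ((1 - α) * a), mul_div_cancel₀ _ hden]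

lemma mixture_mul_eq_of_agree {α a b x y : ℝ} (h : b = 0 ∨ x = y) :
    ((1 - α) * a + α * b) * x = (1 - α) * (a * x) + α * (b * y) := by
  rcases h with rfl | rfl <;> ring

lemma sum_eq_mixture_of_forall {ι : Type*} (s : Finset ι) {f g h : ι → ℝ} {α : ℝ}
    (hfgh : ∀ i, f i = (1 - α) * g i + α * h i) :
    ∑ i ∈ s, f i = (1 - α) * ∑ i ∈ s, g i + α * ∑ i ∈ s, h i := by
  simp only [hfgh, sum_add_distrib, mul_sum]

lemma mixedPolicy_rate_eq {Y : Type*} {y₀ : Y} {π₁ π₂ φ₁ φ₂ φ' : Y → ℝ} {α : ℝ}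
    (hden : α * π₂ y₀ + (1 - α) * π₁ y₀ ≠ 0) (hπ₂0 : ∀ y, 0 ≤ π₂ y)
    (hφoff : ∀ y, y ≠ y₀ → φ' y = φ₁ y) (hφsupp : ∀ y, y ≠ y₀ → 0 < π₂ y → φ₁ y = φ₂ y)
    (hφ'y₀ : φ' y₀ = α * π₂ y₀ / (α * π₂ y₀ + (1 - α) * π₁ y₀))
    (hφ₁y₀ : φ₁ y₀ = 0) (hφ₂y₀ : φ₂ y₀ = 1) (y : Y) :
    ((1 - α) * π₁ y + α * π₂ y) * φ' y = (1 - α) * (π₁ y * φ₁ y) + α * (π₂ y * φ₂ y) := by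
  by_cases hy : y = y₀
  · subst hy
    rw [hφ'y₀, mixture_mul_mixingWeight hden, hφ₁y₀, hφ₂y₀]
    ring
  · rw [hφoff y hy]
    refine mixture_mul_eq_of_agree ?_
    rcases (hπ₂0 y).eq_or_lt with h | h
    · exact .inl h.symm
    · exact .inr (hφsupp y hy h)

theorem stmt16_general {Y : Type*} [Fintype Y]
    (y₀ : Y)
    (π₁ π₂ : Y → ℝ)
    (hπ₂0 : ∀ y, 0 ≤ π₂ y)
    (hπ₁pos : 0 < π₁ y₀) (hπ₂pos : 0 < π₂ y₀)
    (α γ : ℝ) (hα : α ∈ Set.Ioo (0 : ℝ) 1)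
    (hγ : γ = α * π₂ y₀ / (α * π₂ y₀ + (1 - α) * π₁ y₀))
    (φ₁ φ₂ φ' : Y → ℝ) (μ : Y → ℝ)
    (hφoff : ∀ y, y ≠ y₀ → φ' y = φ₁ y)
    (hφsupp : ∀ y, y ≠ y₀ → 0 < π₂ y → φ₁ y = φ₂ y)
    (hφ'y₀ : φ' y₀ = γ) (hφ₁y₀ : φ₁ y₀ = 0) (hφ₂y₀ : φ₂ y₀ = 1) :
    (∑ y, ((1 - α) * π₁ y + α * π₂ y) * φ' y * μ y
        = (1 - α) * ∑ y, π₁ y * φ₁ y * μ y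
          + α * ∑ y, π₂ y * φ₂ y * μ y) ∧
    (∑ y, ((1 - α) * π₁ y + α * π₂ y) * φ' y
        = (1 - α) * ∑ y, π₁ y * φ₁ y
          + α * ∑ y, π₂ y * φ₂ y) := by
  have hden : α * π₂ y₀ + (1 - α) * π₁ y₀ ≠ 0 := by
    have := mul_pos hα.1 hπ₂pos
    have := mul_pos (sub_pos.mpr hα.2) hπ₁pos
    positivity
  have hrate := mixedPolicy_rate_eq hden hπ₂0 hφoff hφsupp (hγ ▸ hφ'y₀) hφ₁y₀ hφ₂y₀
  refine ⟨sum_eq_mixture_of_forall _ fun y => ?_, sum_eq_mixture_of_forall _ hrate⟩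
  rw [hrate y]
  ring

/-- **Splitting of service and utilization rates under policy mixing.**
In the setting of the stationary-distribution splitting lemma (two kernels
`P₁, P₂` induced by policies `φ₁, φ₂` differing only at `y₀`, stationary
distributions `π₁, π₂` positive at `y₀`, mixing weight
`γ = α π₂(y₀) / (α π₂(y₀) + (1−α) π₁(y₀))`, mixed policy `φ'` equal to
`φ₁ = φ₂` off `y₀` on the relevant supports and `φ'(y₀) = γ`, where at `y₀`
the two policies take the extreme values `φ₁(y₀) = 0`, `φ₂(y₀) = 1`), the
mixed averages split affinely:
`Σ π' φ' μ = (1−α) Σ π₁ φ₁ μ + α Σ π₂ φ₂ μ` and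
`Σ π' φ' = (1−α) Σ π₁ φ₁ + α Σ π₂ φ₂`. -/
theorem stmt16 {Y : Type*} [Fintype Y] [DecidableEq Y]
    (P₁ P₂ P' : Matrix Y Y ℝ)
    (hP₁0 : ∀ i j, 0 ≤ P₁ i j) (hP₁1 : ∀ i, ∑ j, P₁ i j = 1)
    (hP₂0 : ∀ i j, 0 ≤ P₂ i j) (hP₂1 : ∀ i, ∑ j, P₂ i j = 1)
    (y₀ : Y)
    (hagree : ∀ y, y ≠ y₀ → P₁ y = P₂ y)
    (π₁ π₂ : Y → ℝ)
    (hπ₁0 : ∀ y, 0 ≤ π₁ y) (hπ₁1 : ∑ y, π₁ y = 1) (hπ₁stat : π₁ ᵥ* P₁ = π₁)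
    (hπ₂0 : ∀ y, 0 ≤ π₂ y) (hπ₂1 : ∑ y, π₂ y = 1) (hπ₂stat : π₂ ᵥ* P₂ = π₂)
    (hπ₁pos : 0 < π₁ y₀) (hπ₂pos : 0 < π₂ y₀)
    (α γ : ℝ) (hα : α ∈ Set.Ioo (0 : ℝ) 1)
    (hγ : γ = α * π₂ y₀ / (α * π₂ y₀ + (1 - α) * π₁ y₀))
    (hP'off : ∀ y, y ≠ y₀ → P' y = P₁ y)
    (hP'y₀ : ∀ z, P' y₀ z = (1 - γ) * P₁ y₀ z + γ * P₂ y₀ z)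
    (φ₁ φ₂ φ' : Y → ℝ) (μ : Y → ℝ)
    (hφ₁ : ∀ y, φ₁ y ∈ Set.Icc (0 : ℝ) 1) (hφ₂ : ∀ y, φ₂ y ∈ Set.Icc (0 : ℝ) 1)
    (hφoff : ∀ y, y ≠ y₀ → φ' y = φ₁ y)
    (hφsupp : ∀ y, y ≠ y₀ → 0 < π₂ y → φ₁ y = φ₂ y)
    (hφ'y₀ : φ' y₀ = γ) (hφ₁y₀ : φ₁ y₀ = 0) (hφ₂y₀ : φ₂ y₀ = 1) :
    (∑ y, ((1 - α) * π₁ y + α * π₂ y) * φ' y * μ y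
        = (1 - α) * ∑ y, π₁ y * φ₁ y * μ y
          + α * ∑ y, π₂ y * φ₂ y * μ y) ∧
    (∑ y, ((1 - α) * π₁ y + α * π₂ y) * φ' y
        = (1 - α) * ∑ y, π₁ y * φ₁ y
          + α * ∑ y, π₂ y * φ₂ y) :=
  stmt16_general y₀ π₁ π₂ hπ₂0 hπ₁pos hπ₂pos α γ hα hγ φ₁ φ₂ φ' μ hφoff hφsupp hφ'y₀ hφ₁y₀ hφ₂y₀
end
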